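/- Let D_c on ℝ⁹ be the kernel of the Pfaffian system dx₁ - x₂dt = dy₁ - y₂dt = dt - x₃dx₂ = dy₂ - y₃dx₂ = dx₃ - (1+x₄)dx₂ = dy₃ - (c+y₄)dx₂ = 0. Then the change of variables y₃ = ȳ₃ + c x₃, y₄ = ȳ₄ + c x₄, y₂ = ȳ₂ + c t, y₁ = ȳ₁ + (c/2)t² transforms D_c into D_0. Hence all transverse non-strongly-nilpotent 1.2.1 germs with the constant b normalized to 1 are locally equivalent to the model with c = 0. -/

import Mathlib

/-- ℝ⁹ with coordinates t, x₁, y₁, x₂, y₂, x₃, y₃, x₄, y₄ (indices 0,…,8). -/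
abbrev E9 := Fin 9 → ℝ

/-- Generator of the kernel of the transverse 1.2.1 Pfaffian system (b
normalized to 1) with parameter c (completed by ∂_{x₄}, ∂_{y₄}):
`Z₁ = x₃∂_t + x₂x₃∂_{x₁} + y₂x₃∂_{y₁} + ∂_{x₂} + y₃∂_{y₂} + (1+x₄)∂_{x₃} + (c+y₄)∂_{y₃}`. -/
noncomputable def Zone (c : ℝ) : E9 → E9 := fun v =>
  ![v 5, v 3 * v 5, v 4 * v 5, 1, v 6, 1 + v 7, c + v 8, 0, 0]

/-- The kernel distribution D_c, spanned by Z₁, ∂_{x₄}, ∂_{y₄}. -/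
noncomputable def Dc (c : ℝ) : E9 → Submodule ℝ E9 :=
  fun v => Submodule.span ℝ {Zone c v, Pi.single 7 1, Pi.single 8 1}

/-- The substitution `y₃ = ȳ₃ + c x₃`, `y₄ = ȳ₄ + c x₄`, `y₂ = ȳ₂ + c t`,
`y₁ = ȳ₁ + (c/2)t²` (as the map from the barred coordinates to the original ones). -/
noncomputable def Phi (c : ℝ) : E9 → E9 := fun v =>
  ![v 0, v 1, v 2 + c / 2 * v 0 ^ 2, v 3, v 4 + c * v 0, v 5, v 6 + c * v 5,
    v 7, v 8 + c * v 7]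

/-- Local equivalence of distribution germs at 0. -/
noncomputable def DistEquiv (D D' : E9 → Submodule ℝ E9) : Prop :=
  ∃ (Φ Ψ : E9 → E9) (U : Set E9), IsOpen U ∧ (0 : E9) ∈ U ∧ Φ 0 = 0 ∧
    ContDiffOn ℝ (⊤ : ℕ∞) Φ U ∧ ContDiffOn ℝ (⊤ : ℕ∞) Ψ (Φ '' U) ∧
    (∀ v ∈ U, Ψ (Φ v) = v) ∧
    ∀ v ∈ U, Submodule.map (fderiv ℝ Φ v).toLinearMap (D v) = D' (Φ v)

@[simp] lemma vec9_app0 {α : Type*} (x0 x1 x2 x3 x4 x5 x6 x7 x8 : α) :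
    (![x0, x1, x2, x3, x4, x5, x6, x7, x8] : Fin 9 → α) (0 : Fin 9) = x0 := rfl
@[simp] lemma vec9_app1 {α : Type*} (x0 x1 x2 x3 x4 x5 x6 x7 x8 : α) :
    (![x0, x1, x2, x3, x4, x5, x6, x7, x8] : Fin 9 → α) (1 : Fin 9) = x1 := rfl
@[simp] lemma vec9_app2 {α : Type*} (x0 x1 x2 x3 x4 x5 x6 x7 x8 : α) :
    (![x0, x1, x2, x3, x4, x5, x6, x7, x8] : Fin 9 → α) (2 : Fin 9) = x2 := rfl
@[simp] lemma vec9_app3 {α : Type*} (x0 x1 x2 x3 x4 x5 x6 x7 x8 : α) :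
    (![x0, x1, x2, x3, x4, x5, x6, x7, x8] : Fin 9 → α) (3 : Fin 9) = x3 := rfl
@[simp] lemma vec9_app4 {α : Type*} (x0 x1 x2 x3 x4 x5 x6 x7 x8 : α) :
    (![x0, x1, x2, x3, x4, x5, x6, x7, x8] : Fin 9 → α) (4 : Fin 9) = x4 := rfl
@[simp] lemma vec9_app5 {α : Type*} (x0 x1 x2 x3 x4 x5 x6 x7 x8 : α) :
    (![x0, x1, x2, x3, x4, x5, x6, x7, x8] : Fin 9 → α) (5 : Fin 9) = x5 := rfl
@[simp] lemma vec9_app6 {α : Type*} (x0 x1 x2 x3 x4 x5 x6 x7 x8 : α) :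
    (![x0, x1, x2, x3, x4, x5, x6, x7, x8] : Fin 9 → α) (6 : Fin 9) = x6 := rfl
@[simp] lemma vec9_app7 {α : Type*} (x0 x1 x2 x3 x4 x5 x6 x7 x8 : α) :
    (![x0, x1, x2, x3, x4, x5, x6, x7, x8] : Fin 9 → α) (7 : Fin 9) = x7 := rfl
@[simp] lemma vec9_app8 {α : Type*} (x0 x1 x2 x3 x4 x5 x6 x7 x8 : α) :
    (![x0, x1, x2, x3, x4, x5, x6, x7, x8] : Fin 9 → α) (8 : Fin 9) = x8 := rfl

open ContinuousLinearMap in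
noncomputable def Lmap (c : ℝ) (v : E9) : E9 →L[ℝ] E9 :=
  ContinuousLinearMap.pi
    ![proj 0, proj 1, proj 2 + (c * v 0) • proj 0, proj 3, proj 4 + c • proj 0,
      proj 5, proj 6 + c • proj 5, proj 7, proj 8 + c • proj 7]

open ContinuousLinearMap in
lemma hasFDerivAt_Phi (c : ℝ) (v : E9) : HasFDerivAt (Phi c) (Lmap c v) v := by
  unfold Phi Lmap
  rw [show (fun v : E9 => ![v 0, v 1, v 2 + c / 2 * v 0 ^ 2, v 3, v 4 + c * v 0, v 5,
      v 6 + c * v 5, v 7, v 8 + c * v 7]) = (fun v i => ![fun v : E9 => v 0, fun v : E9 => v 1,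
      fun v : E9 => v 2 + c / 2 * v 0 ^ 2, fun v : E9 => v 3, fun v : E9 => v 4 + c * v 0,
      fun v : E9 => v 5, fun v : E9 => v 6 + c * v 5, fun v : E9 => v 7,
      fun v : E9 => v 8 + c * v 7] i v) from by
    funext v i; fin_cases i <;> rfl]
  apply hasFDerivAt_pi.2
  have hap : ∀ i : Fin 9, HasFDerivAt (fun v : E9 => v i) (proj i : E9 →L[ℝ] ℝ) v :=
    fun i => hasFDerivAt_apply (𝕜 := ℝ) (F' := fun _ : Fin 9 => ℝ) i v
  intro i
  fin_cases i <;> simp only [Matrix.cons_val_zero, Matrix.cons_val_one, Matrix.head_cons,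
    Matrix.cons_val_succ]
  · exact hap 0
  · exact hap 1
  · simp only [pow_two]
    have h := (hap 2).add (((hap 0).mul (hap 0)).const_mul (c / 2))
    convert h using 1
    ext w; simp; ring
    ext w; simp; ring
  · exact hap 3
  · exact (hap 4).add ((hap 0).const_mul c)
  · exact hap 5
  · exact (hap 6).add ((hap 5).const_mul c)
  · exact hap 7
  · exact (hap 8).add ((hap 7).const_mul c)

lemma Lmap_Zone (a c : ℝ) (v : E9) : Lmap c v (Zone a v) = Zone (a + c) (Phi c v) := by
  funext i
  fin_cases i <;>
    simp [Lmap, Zone, Phi, ContinuousLinearMap.pi_apply] <;> ring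

lemma Lmap_e7 (c : ℝ) (v : E9) :
    Lmap c v (Pi.single 7 1) = Pi.single 7 1 + c • (Pi.single 8 1 : E9) := by
  funext i
  fin_cases i <;>
    simp [Lmap, ContinuousLinearMap.pi_apply, Pi.single_apply]

lemma Lmap_e8 (c : ℝ) (v : E9) :
    Lmap c v (Pi.single 8 1) = (Pi.single 8 1 : E9) := by
  funext i
  fin_cases i <;>
    simp [Lmap, ContinuousLinearMap.pi_apply, Pi.single_apply]

lemma keymap (a c : ℝ) (v : E9) :
    Submodule.map (fderiv ℝ (Phi c) v).toLinearMap (Dc a v) = Dc (a + c) (Phi c v) := by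
  rw [(hasFDerivAt_Phi c v).fderiv]
  unfold Dc
  rw [Submodule.map_span]
  rw [show (Lmap c v).toLinearMap '' {Zone a v, Pi.single 7 1, Pi.single 8 1} =
      {Zone (a + c) (Phi c v), Pi.single 7 1 + c • (Pi.single 8 1 : E9), Pi.single 8 1} by
    rw [Set.image_insert_eq, Set.image_insert_eq, Set.image_singleton]
    simp only [ContinuousLinearMap.coe_coe, Lmap_Zone, Lmap_e7, Lmap_e8]]
  apply le_antisymm <;> rw [Submodule.span_le] <;> intro x hx <;>
    simp only [Set.mem_insert_iff, Set.mem_singleton_iff] at hx <;>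
    rcases hx with rfl | rfl | rfl
  · exact Submodule.subset_span (by simp)
  · exact Submodule.add_mem _ (Submodule.subset_span (by simp))
      (Submodule.smul_mem _ c (Submodule.subset_span (by simp)))
  · exact Submodule.subset_span (by simp)
  · exact Submodule.subset_span (by simp)
  · have : (Pi.single 7 1 : E9) =
        (Pi.single 7 1 + c • (Pi.single 8 1 : E9)) - c • (Pi.single 8 1 : E9) := by abel
    rw [this]
    exact Submodule.sub_mem _ (Submodule.subset_span (by simp))
      (Submodule.smul_mem _ c (Submodule.subset_span (by simp)))
  · exact Submodule.subset_span (by simp)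

lemma contDiff_Phi (c : ℝ) : ContDiff ℝ (⊤ : ℕ∞) (Phi c) := by
  unfold Phi
  rw [show (fun v : E9 => ![v 0, v 1, v 2 + c / 2 * v 0 ^ 2, v 3, v 4 + c * v 0, v 5,
      v 6 + c * v 5, v 7, v 8 + c * v 7]) = (fun v i => ![fun v : E9 => v 0, fun v : E9 => v 1,
      fun v : E9 => v 2 + c / 2 * v 0 ^ 2, fun v : E9 => v 3, fun v : E9 => v 4 + c * v 0,
      fun v : E9 => v 5, fun v : E9 => v 6 + c * v 5, fun v : E9 => v 7,
      fun v : E9 => v 8 + c * v 7] i v) from by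
    funext v i; fin_cases i <;> rfl]
  apply contDiff_pi.2
  intro i
  fin_cases i
  · show ContDiff ℝ (⊤ : ℕ∞) (fun v : E9 => v 0); fun_prop
  · show ContDiff ℝ (⊤ : ℕ∞) (fun v : E9 => v 1); fun_prop
  · show ContDiff ℝ (⊤ : ℕ∞) (fun v : E9 => v 2 + c / 2 * v 0 ^ 2); fun_prop
  · show ContDiff ℝ (⊤ : ℕ∞) (fun v : E9 => v 3); fun_prop
  · show ContDiff ℝ (⊤ : ℕ∞) (fun v : E9 => v 4 + c * v 0); fun_prop
  · show ContDiff ℝ (⊤ : ℕ∞) (fun v : E9 => v 5); fun_prop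
  · show ContDiff ℝ (⊤ : ℕ∞) (fun v : E9 => v 6 + c * v 5); fun_prop
  · show ContDiff ℝ (⊤ : ℕ∞) (fun v : E9 => v 7); fun_prop
  · show ContDiff ℝ (⊤ : ℕ∞) (fun v : E9 => v 8 + c * v 7); fun_prop


/-- The change of variables `Phi c` transforms D_c into D₀ (its differential
maps D₀ onto D_c); hence every transverse non-strongly-nilpotent 1.2.1 germ
with b normalized to 1 is locally equivalent to the model with c = 0. -/
theorem class_121_transverse_constant_removable (c : ℝ) :
    (∀ v : E9,
      Submodule.map (fderiv ℝ (Phi c) v).toLinearMap (Dc 0 v) = Dc c (Phi c v)) ∧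
    ∀ c' : ℝ, DistEquiv (Dc c') (Dc 0) := by
  constructor
  · intro v
    have := keymap 0 c v
    rwa [zero_add] at this
  · intro c'
    refine ⟨Phi (-c'), Phi c', Set.univ, isOpen_univ, trivial, ?_, (contDiff_Phi _).contDiffOn,
      (contDiff_Phi _).contDiffOn, ?_, ?_⟩
    · funext i; fin_cases i <;> simp [Phi]
    · intro v _
      funext i
      fin_cases i <;> (simp [Phi]; try ring)
    · intro v _
      have := keymap c' (-c') v
      rwa [add_neg_cancel] at this
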